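/- Suppose Γ : closure(Π) × [0,T] → ℝ is continuous, C^{2,1} for t > 0, satisfies (L+1)Γ ≤ 0 in Π × (0,T] where L = ∂_t + b·∇ − Δ + (2/r)∂_r with b continuous and bounded, satisfies (∂_n + 2)Γ ≤ 0 on ∂Π × (0,T], and Γ(·,0) ≤ 0. If in addition Γ is bounded and attains its supremum somewhere in closure(Π) × [0,T], then Γ ≤ 0 on Π × [0,T]. -/

import Mathlib

/-!
Let `(x₁, t₁)` be the point where `Γ` attains its supremum and suppose `Γ x₁ t₁ > 0`. Then
`t₁ > 0` by the initial condition, and maximality in time gives `∂ₜΓ ≥ 0` there. If `x₁` is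
interior, the gradient vanishes and `ΔΓ ≤ 0`, so the differential inequality forces
`Γ x₁ t₁ ≤ 0`. If `x₁` lies on `{r = 1}`, moving outward along the radial direction stays in
`closure Π`, so `∂ᵣΓ ≤ 0`, and the Robin condition gives `2 Γ x₁ t₁ ≤ ∂ᵣΓ ≤ 0`.
-/

abbrev E3 := EuclideanSpace ℝ (Fin 3)

noncomputable def cylRad (x : E3) : ℝ := Real.sqrt ((x 0) ^ 2 + (x 1) ^ 2)

def cylExt : Set E3 := {x | 1 < cylRad x}

noncomputable def pd (f : E3 → ℝ) (i : Fin 3) (x : E3) : ℝ :=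
  fderiv ℝ f x (EuclideanSpace.single i 1)

noncomputable def lap (f : E3 → ℝ) (x : E3) : ℝ := ∑ i, pd (fun y => pd f i y) i x

noncomputable def radD (f : E3 → ℝ) (x : E3) : ℝ :=
  (x 0 * pd f 0 x + x 1 * pd f 1 x) / cylRad x

open Set Filter Topology

lemma IsLocalMax.deriv_deriv_nonpos {g : ℝ → ℝ} {a : ℝ} (h : IsLocalMax g a)
    (hg : ContinuousAt g a) : deriv (deriv g) a ≤ 0 := by
  by_contra! hpos
  -- then `a` is also a local minimum, so `g` is locally constant and `deriv (deriv g) a = 0`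
  have hmin : IsLocalMin g a := isLocalMin_of_deriv_deriv_pos hpos h.deriv_eq_zero hg
  have hconst : g =ᶠ[𝓝 a] fun _ => g a := by
    filter_upwards [h, hmin] with s hmax hmin using le_antisymm hmax hmin
  have : deriv (deriv g) a = 0 := by
    rw [(hconst.deriv.trans (Eventually.of_forall fun _ => deriv_const _ _)).deriv_eq]
    exact deriv_const _ _
  exact hpos.ne' this

lemma IsLocalMax.fderiv_fderiv_apply_self_nonpos {E : Type*} [NormedAddCommGroup E]
    [NormedSpace ℝ E] {f : E → ℝ} {x : E} (h : IsLocalMax f x) (hf : ContDiff ℝ 2 f) (v : E) :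
    fderiv ℝ (fun y => fderiv ℝ f y v) x v ≤ 0 := by
  let γ : ℝ → E := fun s => x + s • v
  have hγ0 : γ 0 = x := by simp [γ]
  have hγ (s : ℝ) : HasDerivAt γ v s :=
    (((hasDerivAt_id s).smul_const v).const_add x).congr_deriv (one_smul ℝ v)
  have hderiv : deriv (f ∘ γ) = fun s => fderiv ℝ f (γ s) v := funext fun s =>
    ((hf.differentiable two_ne_zero _).hasFDerivAt.comp_hasDerivAt s (hγ s)).deriv
  have hdir : DifferentiableAt ℝ (fun y => fderiv ℝ f y v) (γ 0) :=
    ((hf.fderiv_right one_add_one_eq_two.le).differentiable one_ne_zero _).clm_apply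
      (differentiableAt_const v)
  have hsecond : deriv (deriv (f ∘ γ)) 0 = fderiv ℝ (fun y => fderiv ℝ f y v) x v := by
    rw [hderiv, ← hγ0]
    exact (hdir.hasFDerivAt.comp_hasDerivAt 0 (hγ 0)).deriv
  rw [← hsecond]
  refine IsLocalMax.deriv_deriv_nonpos ?_ (hf.continuous.continuousAt.comp (hγ 0).continuousAt)
  exact (hγ0 ▸ h).comp_continuous (hγ 0).continuousAt

lemma derivWithin_Icc_nonneg_of_isLocalMaxOn {g : ℝ → ℝ} {a b t : ℝ}
    (h : IsLocalMaxOn g (Icc a b) t) (ht : t ∈ Ioc a b) : 0 ≤ derivWithin g (Icc a b) t := by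
  have hcone : a - t ∈ posTangentConeAt (Icc a b) t :=
    sub_mem_posTangentConeAt_of_segment_subset <| by
      rw [segment_symm, segment_eq_Icc ht.1.le]
      exact Icc_subset_Icc_right ht.2
  have := h.fderivWithin_nonpos hcone
  rw [← toSpanSingleton_derivWithin, ContinuousLinearMap.toSpanSingleton_apply, smul_eq_mul] at this
  exact nonneg_of_mul_nonpos_right this (sub_neg.2 ht.1)

lemma pd_eq_zero_of_isLocalMax {f : E3 → ℝ} {x : E3} (h : IsLocalMax f x) (i : Fin 3) :
    pd f i x = 0 := by
  simp [pd, h.fderiv_eq_zero]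

lemma lap_nonpos_of_isLocalMax {f : E3 → ℝ} {x : E3} (h : IsLocalMax f x)
    (hf : ContDiff ℝ 2 f) : lap f x ≤ 0 :=
  Finset.sum_nonpos fun _ _ => h.fderiv_fderiv_apply_self_nonpos hf _

lemma continuous_cylRad : Continuous cylRad := by
  unfold cylRad; fun_prop

lemma isOpen_cylExt : IsOpen cylExt :=
  isOpen_lt continuous_const continuous_cylRad

lemma one_le_cylRad_of_mem_closure {x : E3} (hx : x ∈ closure cylExt) : 1 ≤ cylRad x :=
  closure_minimal (fun _ hy => le_of_lt hy) (isClosed_le continuous_const continuous_cylRad) hx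

noncomputable def cylRadial (x : E3) : E3 :=
  x 0 • EuclideanSpace.single 0 1 + x 1 • EuclideanSpace.single 1 1

lemma fderiv_apply_cylRadial (f : E3 → ℝ) (x : E3) :
    fderiv ℝ f x (cylRadial x) = x 0 * pd f 0 x + x 1 * pd f 1 x := by
  simp [cylRadial, pd]

lemma cylRad_add_smul_cylRadial (x : E3) {s : ℝ} (hs : 0 ≤ 1 + s) :
    cylRad (x + s • cylRadial x) = (1 + s) * cylRad x := by
  have h0 : (x + s • cylRadial x) 0 = (1 + s) * x 0 := by simp [cylRadial]; ring
  have h1 : (x + s • cylRadial x) 1 = (1 + s) * x 1 := by simp [cylRadial]; ring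
  rw [cylRad, cylRad, h0, h1, mul_pow, mul_pow, ← mul_add, Real.sqrt_mul (sq_nonneg _),
    Real.sqrt_sq hs]

lemma radD_nonpos_of_isLocalMaxOn {f : E3 → ℝ} {x : E3} (hx : cylRad x = 1)
    (h : IsLocalMaxOn f (closure cylExt) x) (hf : DifferentiableAt ℝ f x) : radD f x ≤ 0 := by
  have hcone : cylRadial x ∈ posTangentConeAt (closure cylExt) x := by
    refine posTangentConeAt_mono subset_closure (mem_posTangentConeAt_of_frequently_mem ?_)
    refine (eventually_nhdsWithin_of_forall fun s (hs : s ∈ Ioi 0) => ?_).frequently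
    show 1 < cylRad (x + s • cylRadial x)
    rw [cylRad_add_smul_cylRadial x (by linarith [mem_Ioi.mp hs]), hx]
    linarith [mem_Ioi.mp hs]
  rw [radD, hx, div_one, ← fderiv_apply_cylRadial]
  exact h.hasFDerivWithinAt_nonpos hf.hasFDerivAt.hasFDerivWithinAt hcone

lemma radD_eq_zero_of_isLocalMax {f : E3 → ℝ} {x : E3} (h : IsLocalMax f x) : radD f x = 0 := by
  simp [radD, pd_eq_zero_of_isLocalMax h]

theorem stmt5_general (T : ℝ) (b : E3 → E3)
    (Γ : E3 → ℝ → ℝ)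
    (hregx : ∀ t ∈ Set.Ioc 0 T, ContDiff ℝ 2 (fun x => Γ x t))
    (heq : ∀ x ∈ cylExt, ∀ t ∈ Set.Ioc 0 T,
      derivWithin (Γ x) (Set.Icc 0 T) t
        + (∑ i, b x i * pd (fun y => Γ y t) i x)
        - lap (fun y => Γ y t) x
        + (2 / cylRad x) * radD (fun y => Γ y t) x
        + Γ x t ≤ 0)
    (hRobin : ∀ x, cylRad x = 1 → ∀ t ∈ Set.Ioc 0 T,
      -(radD (fun y => Γ y t) x) + 2 * Γ x t ≤ 0)
    (hinit : ∀ x ∈ closure cylExt, Γ x 0 ≤ 0)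
    (hattain : ∃ x₁ ∈ closure cylExt, ∃ t₁ ∈ Set.Icc 0 T,
      ∀ x ∈ closure cylExt, ∀ t ∈ Set.Icc 0 T, Γ x t ≤ Γ x₁ t₁) :
    ∀ x ∈ cylExt, ∀ t ∈ Set.Icc 0 T, Γ x t ≤ 0 := by
  obtain ⟨x₁, hx₁, t₁, ht₁, hM⟩ := hattain
  suffices Γ x₁ t₁ ≤ 0 from fun x hx t ht => (hM x (subset_closure hx) t ht).trans this
  by_contra! hpos
  have ht₁Ioc : t₁ ∈ Ioc 0 T :=
    ⟨ht₁.1.lt_of_ne (by rintro rfl; linarith [hinit x₁ hx₁]), ht₁.2⟩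
  have hspace : IsMaxOn (fun y => Γ y t₁) (closure cylExt) x₁ := fun y hy => hM y hy t₁ ht₁
  have htime : 0 ≤ derivWithin (Γ x₁) (Icc 0 T) t₁ :=
    derivWithin_Icc_nonneg_of_isLocalMaxOn (IsMaxOn.localize fun t ht => hM x₁ hx₁ t ht) ht₁Ioc
  have hf := hregx t₁ ht₁Ioc
  rcases (one_le_cylRad_of_mem_closure hx₁).eq_or_lt with hbdry | hint
  · have hradD := radD_nonpos_of_isLocalMaxOn hbdry.symm hspace.localize
      (hf.differentiable two_ne_zero x₁)
    linarith [hRobin x₁ hbdry.symm t₁ ht₁Ioc]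
  · have hloc : IsLocalMax (fun y => Γ y t₁) x₁ :=
      hspace.isLocalMax (mem_of_superset (isOpen_cylExt.mem_nhds hint) subset_closure)
    have hPDE := heq x₁ hint t₁ ht₁Ioc
    simp only [pd_eq_zero_of_isLocalMax hloc, radD_eq_zero_of_isLocalMax hloc, mul_zero,
      Finset.sum_const_zero, add_zero] at hPDE
    linarith [lap_nonpos_of_isLocalMax hloc hf]

/-- parabolic maximum principle with Robin boundary condition, case of an
    attained supremum: if (L+1)Γ ≤ 0 in Π × (0,T], (∂_n+2)Γ ≤ 0 on ∂Π × (0,T], Γ(·,0) ≤ 0,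
    and the bounded Γ attains its supremum, then Γ ≤ 0 on Π × [0,T]. -/
theorem stmt5 (T : ℝ) (hT : 0 < T) (b : E3 → E3) (hb : Continuous b)
    (hbB : ∃ B : ℝ, ∀ x, ‖b x‖ ≤ B)
    (Γ : E3 → ℝ → ℝ)
    (hcont : ContinuousOn (fun p : E3 × ℝ => Γ p.1 p.2) (closure cylExt ×ˢ Set.Icc 0 T))
    (hregx : ∀ t ∈ Set.Ioc 0 T, ContDiff ℝ 2 (fun x => Γ x t))
    (hregt : ∀ x ∈ closure cylExt, ∀ t ∈ Set.Ioc 0 T,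
      DifferentiableWithinAt ℝ (Γ x) (Set.Icc 0 T) t)
    (heq : ∀ x ∈ cylExt, ∀ t ∈ Set.Ioc 0 T,
      derivWithin (Γ x) (Set.Icc 0 T) t
        + (∑ i, b x i * pd (fun y => Γ y t) i x)
        - lap (fun y => Γ y t) x
        + (2 / cylRad x) * radD (fun y => Γ y t) x
        + Γ x t ≤ 0)
    (hRobin : ∀ x, cylRad x = 1 → ∀ t ∈ Set.Ioc 0 T,
      -(radD (fun y => Γ y t) x) + 2 * Γ x t ≤ 0)
    (hinit : ∀ x ∈ closure cylExt, Γ x 0 ≤ 0)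
    (hbdd : ∃ C : ℝ, ∀ x ∈ closure cylExt, ∀ t ∈ Set.Icc 0 T, Γ x t ≤ C)
    (hattain : ∃ x₁ ∈ closure cylExt, ∃ t₁ ∈ Set.Icc 0 T,
      ∀ x ∈ closure cylExt, ∀ t ∈ Set.Icc 0 T, Γ x t ≤ Γ x₁ t₁) :
    ∀ x ∈ cylExt, ∀ t ∈ Set.Icc 0 T, Γ x t ≤ 0 :=
  stmt5_general T b Γ hregx heq hRobin hinit hattain
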